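/- arXiv:2101.05773 — 3 statements merged into one kernel-verified Lean document; each statement's English description precedes it below -/
import Mathlib

section
/- The Motzkin polynomial x₀⁶ + x₁⁴x₂² + x₁²x₂⁴ − 3x₀²x₁²x₂² cannot be written as a sum of squares of polynomials in ℝ[x₀, x₁, x₂]. -/
/-!
If `M = ∑ hⱼ²`, then for any weight `w` the top `w`-homogeneous components of the `hⱼ` of
largest `w`-degree would have squares summing to zero, so `2 deg_w hⱼ ≤ deg_w M`. For the weights
`(1,1,1)`, `(2,3,0)`, `(2,0,3)` this confines the exponents of every `hⱼ` to a region in which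
`(2,2,2)` splits as a sum of two exponents only as `(1,1,1) + (1,1,1)`. Comparing coefficients
of `x₀²x₁²x₂²` then gives `-3 = ∑ cⱼ²`, with `cⱼ` the coefficient of `x₀x₁x₂` in `hⱼ`.
-/

open MvPolynomial Finsupp

namespace MvPolynomial

section WeightedDegree

variable {σ R : Type*} [CommSemiring R]

theorem coeff_sq_of_unique_antidiagonal_support {p : MvPolynomial σ R} {m e : σ →₀ ℕ}
    (he : e + e = m) (h : ∀ a b, a + b = m → a ∈ p.support → b ∈ p.support → a = e) :
    coeff m (p ^ 2) = coeff e p ^ 2 := by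
  classical
  rw [sq, sq, coeff_mul, Finset.sum_eq_single (e, e)]
  · rintro ⟨a, b⟩ hab hne
    rw [Finset.HasAntidiagonal.mem_antidiagonal] at hab
    dsimp only at hab ⊢
    by_contra hprod
    obtain rfl := h a b hab (mem_support_iff.mpr (left_ne_zero_of_mul hprod))
      (mem_support_iff.mpr (right_ne_zero_of_mul hprod))
    exact hne (by rw [add_left_cancel (hab.trans he.symm)])
  · exact fun hee => absurd (Finset.HasAntidiagonal.mem_antidiagonal.mpr he) hee

variable (w : σ → ℕ)

theorem coeff_eq_zero_of_weightedTotalDegree_lt {p : MvPolynomial σ R} {d : σ →₀ ℕ}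
    (hd : weightedTotalDegree w p < weight w d) : coeff d p = 0 :=
  notMem_support_iff.mp fun hmem => (le_weightedTotalDegree w hmem).not_gt hd

theorem weightedHomogeneousComponent_mul_of_weightedTotalDegree_le {p q : MvPolynomial σ R}
    {m n : ℕ} (hp : weightedTotalDegree w p ≤ m) (hq : weightedTotalDegree w q ≤ n) :
    weightedHomogeneousComponent w (m + n) (p * q) =
      weightedHomogeneousComponent w m p * weightedHomogeneousComponent w n q := by
  classical
  ext d
  rw [coeff_weightedHomogeneousComponent]
  split_ifs with hd
  · rw [coeff_mul, coeff_mul]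
    refine Finset.sum_congr rfl fun x hx => ?_
    rw [Finset.HasAntidiagonal.mem_antidiagonal] at hx
    rw [← hx, map_add] at hd
    simp only [coeff_weightedHomogeneousComponent]
    rcases trichotomy_of_add_eq_add hd with h | h | h
    · rw [if_pos h.1, if_pos h.2]
    · rw [if_neg h.ne, coeff_eq_zero_of_weightedTotalDegree_lt w (hq.trans_lt (by omega)),
        mul_zero, zero_mul]
    · rw [if_neg h.ne, coeff_eq_zero_of_weightedTotalDegree_lt w (hp.trans_lt (by omega)),
        zero_mul, mul_zero]
  · exact (((weightedHomogeneousComponent_isWeightedHomogeneous m p).mul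
      (weightedHomogeneousComponent_isWeightedHomogeneous n q)).coeff_eq_zero d hd).symm

theorem weightedHomogeneousComponent_weightedTotalDegree_ne_zero {p : MvPolynomial σ R}
    (hp : p ≠ 0) : weightedHomogeneousComponent w (weightedTotalDegree w p) p ≠ 0 := by
  classical
  obtain ⟨d, hd, hdeg⟩ := Finset.exists_mem_eq_sup p.support (support_nonempty.mpr hp) (weight w)
  refine ne_of_apply_ne (coeff d) ?_
  have hd_weight : weight w d = weightedTotalDegree w p := hdeg.symm
  rw [coeff_weightedHomogeneousComponent, if_pos hd_weight, coeff_zero]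
  exact mem_support_iff.mp hd

end WeightedDegree

section SumOfSquares

variable {σ R ι : Type*} [CommRing R] [LinearOrder R] [IsStrictOrderedRing R]

theorem eq_zero_of_sum_sq_eq_zero {s : Finset ι} {q : ι → MvPolynomial σ R}
    (h : ∑ j ∈ s, q j ^ 2 = 0) {i : ι} (hi : i ∈ s) : q i = 0 := by
  refine MvPolynomial.funext fun x => ?_
  have hx : ∑ j ∈ s, eval x (q j) ^ 2 = 0 := by simpa using congrArg (eval x) h
  rw [Finset.sum_eq_zero_iff_of_nonneg fun j _ => sq_nonneg _] at hx
  simpa using hx i hi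

theorem two_mul_weightedTotalDegree_le_of_sum_sq (w : σ → ℕ) {s : Finset ι}
    (h : ι → MvPolynomial σ R) {i : ι} (hi : i ∈ s) :
    2 * weightedTotalDegree w (h i) ≤ weightedTotalDegree w (∑ j ∈ s, h j ^ 2) := by
  obtain ⟨k, hk, hD⟩ := Finset.exists_mem_eq_sup s ⟨i, hi⟩ fun j => weightedTotalDegree w (h j)
  set D := s.sup fun j => weightedTotalDegree w (h j)
  have hle : ∀ j ∈ s, weightedTotalDegree w (h j) ≤ D := fun j hj =>
    Finset.le_sup (f := fun j => weightedTotalDegree w (h j)) hj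
  by_contra! hlt
  have htop : ∑ j ∈ s, weightedHomogeneousComponent w D (h j) ^ 2 = 0 := by
    have hf := weightedHomogeneousComponent_eq_zero (w := w) (2 * D) _
      (lt_of_lt_of_le hlt (Nat.mul_le_mul_left 2 (hle i hi)))
    rw [map_sum] at hf
    rw [← hf]
    refine Finset.sum_congr rfl fun j hj => ?_
    rw [two_mul, sq, sq, weightedHomogeneousComponent_mul_of_weightedTotalDegree_le w
      (hle j hj) (hle j hj)]
  have hk0 : h k ≠ 0 := by
    intro hk0
    rw [hk0, weightedTotalDegree_zero, Nat.bot_eq_zero] at hD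
    have := hle i hi
    omega
  exact weightedHomogeneousComponent_weightedTotalDegree_ne_zero w hk0
    (hD ▸ eq_zero_of_sum_sq_eq_zero htop hk)

end SumOfSquares

end MvPolynomial

namespace Motzkin

noncomputable def exponent (a b c : ℕ) : Fin 3 →₀ ℕ := equivFunOnFinite.symm ![a, b, c]

@[simp] lemma exponent_apply (a b c : ℕ) (j : Fin 3) : exponent a b c j = ![a, b, c] j := rfl

lemma weight_eq_fin_three (w : Fin 3 → ℕ) (d : Fin 3 →₀ ℕ) :
    weight w d = d 0 * w 0 + d 1 * w 1 + d 2 * w 2 := by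
  simp [weight_eq_sum, Fin.sum_univ_three]

variable {R : Type*}

lemma X_pow_mul_X_pow_mul_X_pow [CommSemiring R] (a b c : ℕ) :
    (X 0 ^ a * X 1 ^ b * X 2 ^ c : MvPolynomial (Fin 3) R) = monomial (exponent a b c) 1 := by
  have : single 0 a + single 1 b + single 2 c = exponent a b c := by
    ext j; fin_cases j <;> simp
  simp only [X_pow_eq_monomial, monomial_mul, mul_one, this]

variable (R) [CommRing R]

noncomputable def motzkin : MvPolynomial (Fin 3) R :=
  X 0 ^ 6 + X 1 ^ 4 * X 2 ^ 2 + X 1 ^ 2 * X 2 ^ 4 - 3 * X 0 ^ 2 * X 1 ^ 2 * X 2 ^ 2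

lemma motzkin_eq_sum_monomial : motzkin R = monomial (exponent 6 0 0) 1 +
    monomial (exponent 0 4 2) 1 + monomial (exponent 0 2 4) 1 - monomial (exponent 2 2 2) 3 := by
  rw [← mul_one (3 : R), ← C_mul_monomial]
  simp only [← X_pow_mul_X_pow_mul_X_pow, motzkin, pow_zero, mul_one, one_mul, map_ofNat]
  ring

lemma support_motzkin_subset : (motzkin R).support ⊆
    {exponent 6 0 0, exponent 0 4 2, exponent 0 2 4, exponent 2 2 2} := by
  intro d hd
  rw [MvPolynomial.mem_support_iff, motzkin_eq_sum_monomial] at hd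
  simp only [coeff_sub, coeff_add, coeff_monomial] at hd
  simp only [Finset.mem_insert, Finset.mem_singleton]
  by_contra! hne
  simp [hne.1.symm, hne.2.1.symm, hne.2.2.1.symm, hne.2.2.2.symm] at hd

lemma coeff_motzkin_two_two_two : coeff (exponent 2 2 2) (motzkin R) = -3 := by
  simp [motzkin_eq_sum_monomial, coeff_monomial, exponent]

/-- The weighted-degree bounds for the weights `(1,1,1)`, `(2,3,0)`, `(2,0,3)`; they cut out a
region containing the half Newton polytope `conv {(3,0,0), (0,2,1), (0,1,2)}` of `motzkin`. -/
def Admissible (d : Fin 3 →₀ ℕ) : Prop :=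
  d 0 + d 1 + d 2 ≤ 3 ∧ 2 * d 0 + 3 * d 1 ≤ 6 ∧ 2 * d 0 + 3 * d 2 ≤ 6

lemma eq_exponent_one_one_one_of_add_eq {a b : Fin 3 →₀ ℕ} (hab : a + b = exponent 2 2 2)
    (ha : Admissible a) (hb : Admissible b) : a = exponent 1 1 1 := by
  have h0 : a 0 + b 0 = 2 := by simpa using DFunLike.congr_fun hab 0
  have h1 : a 1 + b 1 = 2 := by simpa using DFunLike.congr_fun hab 1
  have h2 : a 2 + b 2 = 2 := by simpa using DFunLike.congr_fun hab 2
  obtain ⟨ha₁, ha₂, ha₃⟩ := ha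
  obtain ⟨hb₁, hb₂, hb₃⟩ := hb
  ext j; fin_cases j <;> simp <;> omega

variable {R} [LinearOrder R] [IsStrictOrderedRing R]

lemma admissible_of_mem_support {ι : Type*} {s : Finset ι} {h : ι → MvPolynomial (Fin 3) R}
    (hM : motzkin R = ∑ j ∈ s, h j ^ 2) {i : ι} (hi : i ∈ s) {d : Fin 3 →₀ ℕ}
    (hd : d ∈ (h i).support) : Admissible d := by
  have bound : ∀ (w : Fin 3 → ℕ) (n : ℕ), (∀ e ∈ ({exponent 6 0 0, exponent 0 4 2,
      exponent 0 2 4, exponent 2 2 2} : Finset _), weight w e ≤ 2 * n) → weight w d ≤ n := by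
    intro w n hw
    have hsq := two_mul_weightedTotalDegree_le_of_sum_sq w h hi
    have hmotzkin : weightedTotalDegree w (motzkin R) ≤ 2 * n :=
      Finset.sup_le fun e he => hw e (support_motzkin_subset R he)
    have hd' := le_weightedTotalDegree w hd
    rw [← hM] at hsq
    omega
  have h₁ := bound ![1, 1, 1] 3 (by simp [weight_eq_fin_three])
  have h₂ := bound ![2, 3, 0] 6 (by simp [weight_eq_fin_three])
  have h₃ := bound ![2, 0, 3] 6 (by simp [weight_eq_fin_three])
  simp only [weight_eq_fin_three, Matrix.cons_val_zero, Matrix.cons_val_one, Matrix.cons_val,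
    mul_one, mul_zero, add_zero] at h₁ h₂ h₃
  refine ⟨?_, ?_, ?_⟩ <;> omega

variable (R)

theorem motzkin_ne_sum_sq {ι : Type*} (s : Finset ι) (h : ι → MvPolynomial (Fin 3) R) :
    motzkin R ≠ ∑ j ∈ s, h j ^ 2 := by
  intro hM
  have hcoeff : ∀ j ∈ s, coeff (exponent 2 2 2) (h j ^ 2) = coeff (exponent 1 1 1) (h j) ^ 2 :=
    fun j hj => coeff_sq_of_unique_antidiagonal_support (by ext k; fin_cases k <;> rfl)
      fun a b hab ha hb => eq_exponent_one_one_one_of_add_eq hab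
        (admissible_of_mem_support hM hj ha) (admissible_of_mem_support hM hj hb)
  have hcoeff222 := congrArg (coeff (exponent 2 2 2)) hM
  rw [coeff_motzkin_two_two_two, coeff_sum, Finset.sum_congr rfl hcoeff] at hcoeff222
  have := Finset.sum_nonneg fun j (_ : j ∈ s) => sq_nonneg (coeff (exponent 1 1 1) (h j))
  linarith

end Motzkin

theorem stmt_5 :
    ¬ ∃ (r : ℕ) (h : Fin r → MvPolynomial (Fin 3) ℝ),
      (X 0)^6 + (X 1)^4*(X 2)^2 + (X 1)^2*(X 2)^4 - 3*(X 0)^2*(X 1)^2*(X 2)^2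
        = ∑ i, (h i)^2 := by
  rintro ⟨r, h, hM⟩
  exact Motzkin.motzkin_ne_sum_sq ℝ Finset.univ h hM
end

section
/- Every univariate real polynomial that is nonnegative on all of ℝ can be written as a sum of two squares of real polynomials. -/
/-!
Induction on the degree. A nonconstant nonnegative `p` has a complex root `z`. If `z` is real it
is a minimum of `p`, hence a root of `p'` too, so `(X - z)²` divides `p`; otherwise
`(X - z)(X - z̄) = (X - Re z)² + (Im z)²` divides `p`. Either way the cofactor is nonnegative
away from one point, hence everywhere by continuity, and the identity
`(a² + b²)(c² + d²) = (ac - bd)² + (ad + bc)²` closes the induction.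
-/

open Polynomial

def IsSumOfTwoSquares {R : Type*} [CommRing R] (x : R) : Prop :=
  ∃ a b : R, x = a ^ 2 + b ^ 2

theorem IsSumOfTwoSquares.mul {R : Type*} [CommRing R] {x y : R}
    (hx : IsSumOfTwoSquares x) (hy : IsSumOfTwoSquares y) : IsSumOfTwoSquares (x * y) := by
  obtain ⟨a, b, rfl⟩ := hx
  obtain ⟨c, d, rfl⟩ := hy
  exact ⟨a * c - b * d, a * d + b * c, by ring⟩

namespace Polynomial

theorem sq_X_sub_C_dvd_of_isRoot_of_eval_nonneg {p : ℝ[X]} (hp : ∀ t, 0 ≤ p.eval t) {r : ℝ}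
    (hr : p.IsRoot r) : (X - C r) ^ 2 ∣ p := by
  rcases eq_or_ne p 0 with rfl | hp0
  · exact dvd_zero _
  have hmin : IsLocalMin (fun t ↦ p.eval t) r :=
    Filter.Eventually.of_forall fun t ↦ hr.eq_zero.trans_le (hp t)
  have hderiv : p.derivative.IsRoot r := by
    rw [IsRoot.def, ← Polynomial.deriv]
    exact hmin.deriv_eq_zero
  rw [← le_rootMultiplicity_iff hp0]
  exact (one_lt_rootMultiplicity_iff_isRoot hp0).mpr ⟨hr, hderiv⟩

theorem exists_sq_add_sq_dvd_of_eval_nonneg {p : ℝ[X]} (hp : ∀ t, 0 ≤ p.eval t) (hdeg : 0 < p.natDegree) :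
    ∃ a b : ℝ, (X - C a) ^ 2 + C b ^ 2 ∣ p := by
  obtain ⟨z, hz⟩ := IsAlgClosed.exists_aeval_eq_zero ℂ p (natDegree_pos_iff_degree_pos.mp hdeg).ne'
  by_cases him : z.im = 0
  · have hroot : p.IsRoot z.re := by
      rw [← Complex.re_add_im z, him, Complex.ofReal_zero, zero_mul, add_zero,
        ← Complex.coe_algebraMap, aeval_algebraMap_apply, map_eq_zero, coe_aeval_eq_eval] at hz
      exact hz
    exact ⟨z.re, 0, by simpa using sq_X_sub_C_dvd_of_isRoot_of_eval_nonneg hp hroot⟩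
  · refine ⟨z.re, z.im, ?_⟩
    convert p.quadratic_dvd_of_aeval_eq_zero_im_ne_zero hz him using 1
    rw [Complex.sq_norm, Complex.normSq_apply, C_add, C_mul, C_mul, C_mul, C_ofNat]
    ring

theorem eval_nonneg_of_eval_sq_add_sq_mul_nonneg {a b : ℝ} {s : ℝ[X]}
    (hs : ∀ t, 0 ≤ (((X - C a) ^ 2 + C b ^ 2) * s).eval t) (t : ℝ) : 0 ≤ s.eval t := by
  have hoff : ∀ t ≠ a, 0 ≤ s.eval t := by
    intro t ht
    have hqt : 0 < ((X - C a) ^ 2 + C b ^ 2).eval t := by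
      simp only [eval_add, eval_pow, eval_sub, eval_X, eval_C]
      exact add_pos_of_pos_of_nonneg (sq_pos_of_ne_zero (sub_ne_zero.mpr ht)) (sq_nonneg b)
    exact nonneg_of_mul_nonneg_right (by simpa using hs t) hqt
  rcases eq_or_ne t a with rfl | ht
  · exact ge_of_tendsto ((s.continuous.tendsto t).mono_left (nhdsWithin_le_nhds (s := {t}ᶜ)))
      (eventually_nhdsWithin_of_forall hoff)
  · exact hoff t ht

theorem isSumOfTwoSquares_of_eval_nonneg {p : ℝ[X]} (hp : ∀ t, 0 ≤ p.eval t) :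
    IsSumOfTwoSquares p := by
  induction hn : p.natDegree using Nat.strong_induction_on generalizing p with
  | _ n ih =>
  rcases Nat.eq_zero_or_pos n with rfl | hpos
  · have hc : 0 ≤ p.coeff 0 := by simpa [coeff_zero_eq_eval_zero] using hp 0
    refine ⟨C √(p.coeff 0), 0, ?_⟩
    rw [← C_pow, Real.sq_sqrt hc, zero_pow two_ne_zero, add_zero]
    exact eq_C_of_natDegree_eq_zero hn
  obtain ⟨a, b, s, rfl⟩ := exists_sq_add_sq_dvd_of_eval_nonneg hp (hn ▸ hpos)
  have hs : ∀ t, 0 ≤ s.eval t := eval_nonneg_of_eval_sq_add_sq_mul_nonneg hp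
  have hs0 : s ≠ 0 := by
    rintro rfl
    rw [mul_zero, natDegree_zero] at hn
    omega
  have hdeg : s.natDegree < n := by
    rw [← hn, Monic.natDegree_mul' (by monicity!) hs0]
    have : ((X - C a) ^ 2 + C b ^ 2).natDegree = 2 := by compute_degree!
    omega
  exact IsSumOfTwoSquares.mul ⟨X - C a, C b, rfl⟩ (ih _ hdeg hs rfl)

end Polynomial

theorem stmt_7 (p : Polynomial ℝ) (hp : ∀ t : ℝ, 0 ≤ p.eval t) :
    ∃ a b : Polynomial ℝ, p = a^2 + b^2 :=
  isSumOfTwoSquares_of_eval_nonneg hp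
end

section
/- (S-Lemma, homogeneous version) Let p, q be real quadratic forms on ℝⁿ with q indefinite (taking both positive and negative values). If p(x) ≥ 0 for every x ∈ ℝⁿ with q(x) = 0, then there exists λ ∈ ℝ such that p + λq is positive semidefinite. -/
/-!
For `q x > 0 > q y` the line `τ ↦ x + τ • y` meets the cone `q = 0` at parameters
`s < 0 < t` with `s * t = q x / q y`. Since `p ≥ 0` at both points, a positive combination of
`p (x + s • y)` and `p (x + t • y)` cancels the cross term and gives `q y * p x ≤ q x * p y`,
i.e. `-p x / q x ≤ p y / -q y`. So the ratios `-p / q` on `{q > 0}` lie below the ratios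
`p / -q` on `{q < 0}`, and any `λ` in between, e.g. the supremum of the former, makes
`p + λ q` nonnegative.
-/

theorem QuadraticMap.map_add_smul {R M N : Type*} [CommRing R] [AddCommGroup M] [Module R M]
    [AddCommGroup N] [Module R N] (Q : QuadraticMap R M N) (x y : M) (t : R) :
    Q (x + t • y) = Q x + t • polar Q x y + (t * t) • Q y := by
  have hpolar : polar Q x (t • y) = Q (x + t • y) - Q x - Q (t • y) := rfl
  rw [polar_smul_right, Q.map_smul] at hpolar
  rw [hpolar]
  abel

theorem exists_roots_neg_pos_of_pos_of_neg {a c : ℝ} (b : ℝ) (ha : 0 < a) (hc : c < 0) :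
    ∃ s t : ℝ, s < 0 ∧ 0 < t ∧ a + b * s + c * s ^ 2 = 0 ∧ a + b * t + c * t ^ 2 = 0 ∧
      c * (s * t) = a := by
  have hdisc : 0 < b ^ 2 - 4 * a * c := by nlinarith [sq_nonneg b]
  set d := √(b ^ 2 - 4 * a * c)
  have hd2 : d ^ 2 = b ^ 2 - 4 * a * c := Real.sq_sqrt hdisc.le
  have hbd : |b| < d := by
    rw [← Real.sqrt_sq_eq_abs]
    exact Real.sqrt_lt_sqrt (sq_nonneg b) (by nlinarith)
  have h2c : 2 * c < 0 := by linarith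
  have hc0 : c ≠ 0 := hc.ne
  refine ⟨(-b + d) / (2 * c), (-b - d) / (2 * c), div_neg_of_pos_of_neg ?_ h2c,
    div_pos_of_neg_of_neg ?_ h2c, ?_, ?_, ?_⟩
  · linarith [le_abs_self b]
  · linarith [neg_abs_le b]
  · field_simp
    linear_combination hd2
  · field_simp
    linear_combination hd2
  · field_simp
    linear_combination (-1 : ℝ) * hd2

theorem mul_le_of_nonneg_at_neg_of_nonneg_at_pos {α β γ s t : ℝ} (hs : s < 0) (ht : 0 < t)
    (hPs : 0 ≤ α + β * s + γ * s ^ 2) (hPt : 0 ≤ α + β * t + γ * t ^ 2) :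
    γ * (s * t) ≤ α := by
  have hcomb : (t - s) * (α - γ * (s * t)) =
      t * (α + β * s + γ * s ^ 2) - s * (α + β * t + γ * t ^ 2) := by
    ring
  have : 0 ≤ (t - s) * (α - γ * (s * t)) := by
    rw [hcomb]
    exact sub_nonneg.2 <|
      (mul_nonpos_of_nonpos_of_nonneg hs.le hPt).trans (mul_nonneg ht.le hPs)
  exact sub_nonneg.1 (nonneg_of_mul_nonneg_right this (by linarith))

theorem QuadraticMap.mul_le_mul_of_nonneg_of_isotropic {M : Type*} [AddCommGroup M]
    [Module ℝ M] {p q : QuadraticMap ℝ M ℝ} (h : ∀ x, q x = 0 → 0 ≤ p x) {x y : M}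
    (hx : 0 < q x) (hy : q y < 0) : q y * p x ≤ q x * p y := by
  obtain ⟨s, t, hs, ht, hqs, hqt, hst⟩ := exists_roots_neg_pos_of_pos_of_neg (polar q x y) hx hy
  have hline (r : QuadraticMap ℝ M ℝ) (τ : ℝ) :
      r (x + τ • y) = r x + polar r x y * τ + r y * τ ^ 2 := by
    rw [r.map_add_smul, smul_eq_mul, smul_eq_mul]
    ring
  have hps : 0 ≤ p (x + s • y) := h _ (by rw [hline]; linarith)
  have hpt : 0 ≤ p (x + t • y) := h _ (by rw [hline]; linarith)
  rw [hline] at hps hpt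
  calc q y * p x ≤ q y * (p y * (s * t)) :=
        mul_le_mul_of_nonpos_left (mul_le_of_nonneg_at_neg_of_nonneg_at_pos hs ht hps hpt) hy.le
    _ = q y * (s * t) * p y := by ring
    _ = q x * p y := by rw [hst]

theorem stmt_15 (n : ℕ) (p q : QuadraticForm ℝ (Fin n → ℝ))
    (hu : ∃ u, 0 < q u) (hv : ∃ v, q v < 0)
    (h : ∀ x, q x = 0 → 0 ≤ p x) :
    ∃ lam : ℝ, ∀ x, 0 ≤ p x + lam * q x := by
  obtain ⟨u, hu⟩ := hu
  obtain ⟨v, hv⟩ := hv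
  have hratio {x y} (hx : 0 < q x) (hy : q y < 0) : -p x / q x ≤ p y / -q y := by
    rw [div_le_div_iff₀ hx (neg_pos.2 hy)]
    linarith [QuadraticMap.mul_le_mul_of_nonneg_of_isotropic h hx hy]
  set S := (fun x => -p x / q x) '' {x | 0 < q x}
  have hbdd : BddAbove S := ⟨p v / -q v, by rintro _ ⟨x, hx, rfl⟩; exact hratio hx hv⟩
  refine ⟨sSup S, fun x => ?_⟩
  rcases lt_trichotomy (q x) 0 with hx | hx | hx
  · have hle : sSup S ≤ p x / -q x :=
      csSup_le ⟨_, u, hu, rfl⟩ (by rintro _ ⟨y, hy, rfl⟩; exact hratio hy hx)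
    rw [le_div_iff₀ (neg_pos.2 hx)] at hle
    linarith
  · simpa [hx] using h x hx
  · have hle : -p x / q x ≤ sSup S := le_csSup hbdd ⟨x, hx, rfl⟩
    rw [div_le_iff₀ hx] at hle
    linarith
end
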